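/- arXiv:1501.03759 — 2 statements merged into one kernel-verified Lean document; each statement's English description precedes it below -/
import Mathlib

section
/- The number of connected components on exactly i labeled vertices that can occur in a geometric graph on n points, counted via spanning trees, satisfies: the expected number of connected subsets of size i among n i.i.d. points in ℝ^d with bounded density f and connection radius r is at most C(n,i) · i^{i-2} · (‖f‖_∞ · θ_d · (2 i r)^d)^{i-1}, where θ_d is the volume of the unit ball. -/
/-!
A connected induced subgraph on `i` vertices has a path of fewer than `i` edges between any two of
its vertices, so its points lie pairwise within distance `i r ≤ 2 i r =: R`; in particular all of
them lie in the closed ball of radius `R` around any one of them. By independence, conditionally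
on that point the other `i - 1` points fall into this ball with probability at most
`(‖f‖_∞ θ_d R^d)^(i-1)`. Summing over the `C(n,i)` candidate sets gives the bound; the spanning-tree
factor `i^(i-2) ≥ 1` is then free.
-/

open MeasureTheory Metric

/-- The geometric graph on points `pts` with connection radius `r`. -/
def geomGraph {n d : ℕ} (r : ℝ) (pts : Fin n → EuclideanSpace ℝ (Fin d)) :
    SimpleGraph (Fin n) :=
  SimpleGraph.fromRel fun a b => dist (pts a) (pts b) ≤ r

/-- The number of `i`-element subsets of the `n` points that induce a connected subgraph of
the geometric graph with radius `r`. -/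
noncomputable def connCount {n d : ℕ} (i : ℕ) (r : ℝ)
    (pts : Fin n → EuclideanSpace ℝ (Fin d)) : ℕ :=
  (@Finset.filter (Finset (Fin n))
    (fun S : Finset (Fin n) =>
      ((geomGraph r pts).induce (S : Set (Fin n))).Connected)
    (Classical.decPred _) (Finset.univ.powersetCard i)).card

open scoped ENNReal
open Finset ProbabilityTheory

section Geometry

variable {V α : Type*} [PseudoMetricSpace α] {G : SimpleGraph V} {φ : V → α} {r : ℝ}

theorem dist_le_walk_length_mul (hadj : ∀ a b, G.Adj a b → dist (φ a) (φ b) ≤ r)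
    {a b : V} (w : G.Walk a b) : dist (φ a) (φ b) ≤ w.length * r := by
  induction w with
  | nil => simp
  | @cons u v c huv w ih =>
    calc dist (φ u) (φ c) ≤ dist (φ u) (φ v) + dist (φ v) (φ c) := dist_triangle _ _ _
      _ ≤ r + w.length * r := add_le_add (hadj _ _ huv) ih
      _ = (w.cons huv).length * r := by push_cast [SimpleGraph.Walk.length_cons]; ring

theorem dist_le_card_mul_of_connected [Fintype V] (hG : G.Connected) (hr : 0 ≤ r)
    (hadj : ∀ a b, G.Adj a b → dist (φ a) (φ b) ≤ r) (a b : V) :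
    dist (φ a) (φ b) ≤ Fintype.card V * r := by
  classical
  obtain ⟨w⟩ := hG.preconnected a b
  calc dist (φ a) (φ b) ≤ w.toPath.1.length * r := dist_le_walk_length_mul hadj w.toPath.1
    _ ≤ Fintype.card V * r := by gcongr; exact w.toPath.2.length_lt.le

end Geometry

theorem dist_le_of_induce_geomGraph_connected {n d : ℕ} {r : ℝ} (hr : 0 ≤ r)
    {pts : Fin n → EuclideanSpace ℝ (Fin d)} {S : Finset (Fin n)}
    (hS : ((geomGraph r pts).induce (S : Set (Fin n))).Connected)
    {a b : Fin n} (ha : a ∈ S) (hb : b ∈ S) :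
    dist (pts a) (pts b) ≤ #S * r := by
  have hadj : ∀ u v : (S : Set (Fin n)), ((geomGraph r pts).induce (S : Set (Fin n))).Adj u v →
      dist (pts u) (pts v) ≤ r := by
    intro u v huv
    rcases (SimpleGraph.fromRel_adj _ _ _).1 (SimpleGraph.induce_adj.1 huv) with ⟨-, h | h⟩
    · exact h
    · rwa [dist_comm]
  simpa using dist_le_card_mul_of_connected hS hr hadj ⟨a, ha⟩ ⟨b, hb⟩

open Classical in
theorem connCount_le_card_filter_dist_le {n d i : ℕ} {r R : ℝ} (hr : 0 ≤ r) (hR : i * r ≤ R)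
    (pts : Fin n → EuclideanSpace ℝ (Fin d)) :
    connCount i r pts ≤
      #{S ∈ univ.powersetCard i | ∀ a ∈ S, ∀ b ∈ S, dist (pts a) (pts b) ≤ R} := by
  unfold connCount
  rw [filter_congr_decidable]
  refine card_le_card fun S hS => ?_
  rw [mem_filter, mem_powersetCard_univ] at hS ⊢
  refine ⟨hS.1, fun a ha b hb => ?_⟩
  calc dist (pts a) (pts b) ≤ #S * r := dist_le_of_induce_geomGraph_connected hr hS.2 ha hb
    _ ≤ R := by rwa [hS.1]

theorem withDensity_closedBall_le {E : Type*} [NormedAddCommGroup E] [NormedSpace ℝ E]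
    [MeasurableSpace E] [BorelSpace E] [FiniteDimensional ℝ E] (μ : Measure E)
    [μ.IsAddHaarMeasure] {f : E → ℝ} {M : ℝ} (hM : 0 ≤ M) (hf : ∀ x, f x ≤ M) (x : E) {R : ℝ}
    (hR : 0 ≤ R) :
    μ.withDensity (fun y => ENNReal.ofReal (f y)) (closedBall x R) ≤
      ENNReal.ofReal (M * μ.real (ball 0 1) * R ^ Module.finrank ℝ E) := by
  calc μ.withDensity (fun y => ENNReal.ofReal (f y)) (closedBall x R)
      ≤ (ENNReal.ofReal M • μ) (closedBall x R) := by
        rw [← withDensity_const]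
        exact withDensity_mono (ae_of_all _ fun y => ENNReal.ofReal_le_ofReal (hf y)) _
    _ = ENNReal.ofReal (M * μ.real (ball 0 1) * R ^ Module.finrank ℝ E) := by
        rw [Measure.smul_apply, smul_eq_mul, ← ofReal_measureReal measure_closedBall_lt_top.ne,
          Measure.addHaar_real_closedBall μ x hR, ← ENNReal.ofReal_mul hM]
        congr 1
        ring

section Independence

variable {Ω ι E : Type*} [MeasurableSpace Ω] {μ : Measure Ω} [IsProbabilityMeasure μ]
  [PseudoMetricSpace E] [MeasurableSpace E] [OpensMeasurableSpace E] [SecondCountableTopology E]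
  {X : ι → Ω → E} {R : ℝ} {B : ℝ≥0∞}

theorem ProbabilityTheory.iIndepFun.measure_forall_dist_le_le_pow (hX : iIndepFun X μ)
    (hmeas : ∀ k, Measurable (X k)) {j : ι} {T : Finset ι} (hj : j ∉ T)
    (hB : ∀ k ∈ T, ∀ x, μ (X k ⁻¹' closedBall x R) ≤ B) :
    μ {ω | ∀ k ∈ T, dist (X k ω) (X j ω) ≤ R} ≤ B ^ #T := by
  set g : Ω → T → E := fun ω k => X k ω
  have hg : Measurable g := measurable_pi_lambda _ fun k => hmeas k
  set C : Set (E × (T → E)) := {p | ∀ k, dist (p.2 k) p.1 ≤ R}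
  have hC : MeasurableSet C := by
    simp only [C, Set.ofPred_forall]
    exact MeasurableSet.iInter fun k => measurableSet_le (by fun_prop) measurable_const
  have hindep : IndepFun (X j) g μ :=
    (hX.indepFun_finset {j} T (disjoint_singleton_left.2 hj) hmeas).comp
      (measurable_pi_apply (⟨j, mem_singleton_self j⟩ : ({j} : Finset ι))) measurable_id
  have hslice : ∀ x, μ.map g (Prod.mk x ⁻¹' C) ≤ B ^ #T := by
    intro x
    rw [Measure.map_apply hg (measurable_prodMk_left hC)]
    calc μ (g ⁻¹' (Prod.mk x ⁻¹' C)) = μ (⋂ k ∈ T, X k ⁻¹' closedBall x R) := by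
          congr 1; ext ω; simp [C, g]
      _ = ∏ k ∈ T, μ (X k ⁻¹' closedBall x R) :=
          hX.measure_inter_preimage_eq_mul T fun _ _ => measurableSet_closedBall
      _ ≤ B ^ #T := prod_le_pow_card _ _ _ fun k hk => hB k hk x
  -- the law of `(X j, g)` is a product measure, so Tonelli integrates `hslice` over `X j`
  calc μ {ω | ∀ k ∈ T, dist (X k ω) (X j ω) ≤ R} = μ ((fun ω => (X j ω, g ω)) ⁻¹' C) := by
        congr 1; ext ω; simp [C, g]
    _ = (μ.map (X j)).prod (μ.map g) C := by
        rw [← (indepFun_iff_map_prod_eq_prod_map_map (hmeas j).aemeasurable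
          hg.aemeasurable).1 hindep, Measure.map_apply ((hmeas j).prodMk hg) hC]
    _ = ∫⁻ x, μ.map g (Prod.mk x ⁻¹' C) ∂(μ.map (X j)) := Measure.prod_apply hC
    _ ≤ ∫⁻ _, B ^ #T ∂(μ.map (X j)) := lintegral_mono hslice
    _ = B ^ #T := by simp [Measure.map_apply (hmeas j) MeasurableSet.univ]

theorem ProbabilityTheory.iIndepFun.measure_pairwise_dist_le_le_pow (hX : iIndepFun X μ)
    (hmeas : ∀ k, Measurable (X k)) {S : Finset ι} (hS : S.Nonempty)
    (hB : ∀ k ∈ S, ∀ x, μ (X k ⁻¹' closedBall x R) ≤ B) :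
    μ {ω | ∀ a ∈ S, ∀ b ∈ S, dist (X a ω) (X b ω) ≤ R} ≤ B ^ (#S - 1) := by
  classical
  obtain ⟨j, hj⟩ := hS
  calc μ {ω | ∀ a ∈ S, ∀ b ∈ S, dist (X a ω) (X b ω) ≤ R}
      ≤ μ {ω | ∀ k ∈ S.erase j, dist (X k ω) (X j ω) ≤ R} :=
        measure_mono fun ω hω k hk => hω k (mem_of_mem_erase hk) j hj
    _ ≤ B ^ #(S.erase j) := hX.measure_forall_dist_le_le_pow hmeas (notMem_erase j S)
        fun k hk => hB k (mem_of_mem_erase hk)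
    _ = B ^ (#S - 1) := by rw [card_erase_of_mem hj]

end Independence

open Classical in
theorem integral_le_sum_measureReal_of_le_card_filter {Ω ι : Type*} [MeasurableSpace Ω]
    {μ : Measure Ω} [IsFiniteMeasure μ] {P : Finset ι} {E : ι → Set Ω}
    (hE : ∀ S ∈ P, MeasurableSet (E S)) {N : Ω → ℝ} (hN0 : 0 ≤ N)
    (hN : ∀ ω, N ω ≤ #{S ∈ P | ω ∈ E S}) :
    ∫ ω, N ω ∂μ ≤ ∑ S ∈ P, μ.real (E S) := by
  have hcard : ∀ ω, (#{S ∈ P | ω ∈ E S} : ℝ) = ∑ S ∈ P, (E S).indicator 1 ω := by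
    intro ω
    simp [Set.indicator_apply, sum_boole]
  have hint : ∀ S ∈ P, Integrable ((E S).indicator (1 : Ω → ℝ)) μ :=
    fun S hS => (integrable_const 1).indicator (hE S hS)
  calc ∫ ω, N ω ∂μ ≤ ∫ ω, ∑ S ∈ P, (E S).indicator 1 ω ∂μ :=
        integral_mono_of_nonneg (ae_of_all _ hN0) (integrable_finsetSum _ hint)
          (ae_of_all _ fun ω => (hN ω).trans_eq (hcard ω))
    _ = ∑ S ∈ P, μ.real (E S) := by
        rw [integral_finsetSum _ hint]
        exact sum_congr rfl fun S hS => integral_indicator_one (hE S hS)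

theorem integral_connCount_le_sum_measureReal {Ω : Type*} [MeasurableSpace Ω] {μ : Measure Ω}
    [IsFiniteMeasure μ] {n d i : ℕ} {r R : ℝ} (hr : 0 ≤ r) (hR : i * r ≤ R)
    {X : Fin n → Ω → EuclideanSpace ℝ (Fin d)} (hmeas : ∀ j, Measurable (X j)) :
    ∫ ω, (connCount i r (fun j => X j ω) : ℝ) ∂μ ≤
      ∑ S ∈ univ.powersetCard i, μ.real {ω | ∀ a ∈ S, ∀ b ∈ S, dist (X a ω) (X b ω) ≤ R} := by
  classical
  refine integral_le_sum_measureReal_of_le_card_filter (fun S _ => by measurability)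
    (fun _ => Nat.cast_nonneg _) fun ω => ?_
  simp only [Set.mem_ofPred_eq]
  exact Nat.cast_le.2 (connCount_le_card_filter_dist_le hr hR _)

theorem one_le_natCast_zpow_sub_two {i : ℕ} (hi : 1 ≤ i) : (1 : ℝ) ≤ (i : ℝ) ^ ((i : ℤ) - 2) := by
  rcases hi.eq_or_lt with rfl | hi2
  · norm_num
  · exact one_le_zpow₀ (by exact_mod_cast hi) (by omega)

theorem expected_connected_subsets_le_general {Ω : Type*} [MeasurableSpace Ω] (μ : Measure Ω)
    [IsProbabilityMeasure μ] (n d i : ℕ) (hi : 1 ≤ i) (r : ℝ) (hr : 0 < r)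
    (f : EuclideanSpace ℝ (Fin d) → ℝ) (Mf : ℝ) (hf0 : ∀ x, 0 ≤ f x)
    (hfM : ∀ x, f x ≤ Mf)
    (X : Fin n → Ω → EuclideanSpace ℝ (Fin d))
    (hmeas : ∀ j, Measurable (X j))
    (hindep : ProbabilityTheory.iIndepFun X μ)
    (hlaw : ∀ j, Measure.map (X j) μ
      = MeasureTheory.volume.withDensity fun x => ENNReal.ofReal (f x)) :
    (∫ ω, (connCount i r (fun j => X j ω) : ℝ) ∂μ)
      ≤ (n.choose i : ℝ) * (i : ℝ) ^ ((i : ℤ) - 2) *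
        (Mf * (MeasureTheory.volume (ball (0 : EuclideanSpace ℝ (Fin d)) 1)).toReal *
          (2 * i * r) ^ d) ^ (i - 1) := by
  set R := 2 * i * r
  set b := Mf * (volume (ball (0 : EuclideanSpace ℝ (Fin d)) 1)).toReal * R ^ d
  have hMf : 0 ≤ Mf := (hf0 0).trans (hfM 0)
  have hb : 0 ≤ b := by positivity
  have hiR : (i : ℝ) * r ≤ R := by linarith [mul_nonneg i.cast_nonneg hr.le]
  have hball : ∀ k x, μ (X k ⁻¹' closedBall x R) ≤ ENNReal.ofReal b := fun k x => by
    rw [← Measure.map_apply (hmeas k) measurableSet_closedBall, hlaw k]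
    have := withDensity_closedBall_le volume hMf hfM x (R := R) (by positivity)
    rwa [finrank_euclideanSpace_fin] at this
  have hprob : ∀ S ∈ univ.powersetCard i,
      μ.real {ω | ∀ a ∈ S, ∀ b ∈ S, dist (X a ω) (X b ω) ≤ R} ≤ b ^ (i - 1) := by
    intro S hS
    rw [mem_powersetCard_univ] at hS
    refine ENNReal.toReal_le_of_le_ofReal (by positivity) ?_
    rw [ENNReal.ofReal_pow hb, ← hS]
    exact hindep.measure_pairwise_dist_le_le_pow hmeas (card_pos.1 (by omega)) fun k _ => hball k
  calc (∫ ω, (connCount i r (fun j => X j ω) : ℝ) ∂μ)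
      ≤ ∑ S ∈ univ.powersetCard i, μ.real {ω | ∀ a ∈ S, ∀ b ∈ S, dist (X a ω) (X b ω) ≤ R} :=
        integral_connCount_le_sum_measureReal hr.le hiR hmeas
    _ ≤ (n.choose i : ℝ) * b ^ (i - 1) := by simpa using sum_le_card_nsmul _ _ _ hprob
    _ ≤ (n.choose i : ℝ) * (i : ℝ) ^ ((i : ℤ) - 2) * b ^ (i - 1) := by
        rw [mul_assoc]
        exact mul_le_mul_of_nonneg_left (le_mul_of_one_le_left (by positivity)
          (one_le_natCast_zpow_sub_two hi)) (Nat.cast_nonneg _)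

/-- The expected number of connected subsets of size `i` among `n` i.i.d. points in `ℝ^d`
with density `f ≤ Mf` and connection radius `r` is at most
`C(n,i) · i^{i-2} · (Mf · θ_d · (2 i r)^d)^{i-1}`, where `θ_d` is the volume of the unit
ball. -/
theorem expected_connected_subsets_le {Ω : Type*} [MeasurableSpace Ω] (μ : Measure Ω)
    [IsProbabilityMeasure μ] (n d i : ℕ) (hd : 1 ≤ d) (hi : 1 ≤ i) (r : ℝ) (hr : 0 < r)
    (f : EuclideanSpace ℝ (Fin d) → ℝ) (Mf : ℝ) (hf0 : ∀ x, 0 ≤ f x)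
    (hfM : ∀ x, f x ≤ Mf)
    (X : Fin n → Ω → EuclideanSpace ℝ (Fin d))
    (hmeas : ∀ j, Measurable (X j))
    (hindep : ProbabilityTheory.iIndepFun X μ)
    (hlaw : ∀ j, Measure.map (X j) μ
      = MeasureTheory.volume.withDensity fun x => ENNReal.ofReal (f x)) :
    (∫ ω, (connCount i r (fun j => X j ω) : ℝ) ∂μ)
      ≤ (n.choose i : ℝ) * (i : ℝ) ^ ((i : ℤ) - 2) *
        (Mf * (MeasureTheory.volume (ball (0 : EuclideanSpace ℝ (Fin d)) 1)).toReal *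
          (2 * i * r) ^ d) ^ (i - 1) :=
  expected_connected_subsets_le_general μ n d i hi r hr f Mf hf0 hfM X hmeas hindep hlaw
end

section
/- Cayley's formula: the number of labeled trees on i ≥ 1 vertices equals i^{i-2}. -/
/-!
Joyal's proof. Rooting a tree at `r` and sending every other vertex to its neighbour towards `r`
identifies rooted trees with maps `p : V → V` all of whose orbits end at the fixed point `r`.
Marking a second vertex `a` singles out the spine `a, p a, …, r`. Replacing `p` on the spine by
the permutation that sends the spine, sorted increasingly, to the spine in path order gives a map
`f : V → V` whose periodic points are exactly the spine; conversely `f` determines its periodic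
points, hence their sorted order, hence the spine and `p`. So doubly rooted trees are equinumerous
with all `n ^ n` maps `V → V`, and `n ^ 2 · #trees = n ^ n`.
-/

open Function Set

namespace Function

variable {α : Type*} {f g : α → α} {s : Set α}

theorem exists_iterate_mem_periodicPts [Finite α] (f : α → α) (x : α) :
    ∃ n, f^[n] x ∈ periodicPts f := by
  have key : ∀ m n, m < n → f^[m] x = f^[n] x → ∃ n, f^[n] x ∈ periodicPts f :=
    fun m n hmn heq => ⟨m, mk_mem_periodicPts (Nat.sub_pos_of_lt hmn) <| by
      rw [IsPeriodicPt, IsFixedPt, ← iterate_add_apply, Nat.sub_add_cancel hmn.le, heq]⟩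
  obtain ⟨m, n, heq, hne⟩ : ∃ m n, f^[m] x = f^[n] x ∧ m ≠ n := by
    simpa [Injective] using not_injective_infinite_finite (f^[·] x)
  rcases lt_or_gt_of_ne hne with hlt | hlt
  exacts [key m n hlt heq, key n m hlt heq.symm]

theorem periodicPts_subset_of_mapsTo (hs : MapsTo f s s) (hreach : ∀ x, ∃ n, f^[n] x ∈ s) :
    periodicPts f ⊆ s := by
  rintro x ⟨k, hk, hx⟩
  obtain ⟨n, hn⟩ := hreach x
  rw [← (hx.mul_const n).eq, ← Nat.sub_add_cancel (Nat.le_mul_of_pos_left n hk),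
    iterate_add_apply]
  exact hs.iterate _ hn

theorem subset_periodicPts_of_injOn (hfin : s.Finite) (hs : MapsTo f s s) (hinj : InjOn f s) :
    s ⊆ periodicPts f := by
  have : Finite s := hfin
  intro x hx
  exact Semiconj.mapsTo_periodicPts (fun y => hs.val_restrict_apply y)
    ((hs.restrict_inj.mpr hinj).mem_periodicPts ⟨x, hx⟩)

theorem exists_iterate_mem_of_eqOn_compl (heq : EqOn g f sᶜ)
    (hreach : ∀ x, ∃ n, f^[n] x ∈ s) (x : α) : ∃ n, g^[n] x ∈ s := by
  obtain ⟨n, hn⟩ := hreach x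
  induction n generalizing x with
  | zero => exact ⟨0, hn⟩
  | succ n ih =>
    by_cases hx : x ∈ s
    · exact ⟨0, hx⟩
    obtain ⟨m, hm⟩ := ih (f x) (by rwa [← iterate_succ_apply])
    exact ⟨m + 1, by rwa [iterate_succ_apply, heq hx]⟩

end Function

namespace List

variable {α : Type*} [DecidableEq α] {L P : List α} {g : α → α} {v : α}

-- Entries of `L` past the end of `P` are fixed: `relabel L L.tail g` moves each entry of `L` to
-- the next one and stops at the last.
def relabel (L P : List α) (g : α → α) (v : α) : α :=
  if v ∈ L then P.getD (L.idxOf v) v else g v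

theorem relabel_getElem (hL : L.Nodup) (P : List α) (g : α → α) {i : ℕ} (hi : i < L.length) :
    relabel L P g L[i] = P.getD i L[i] := by
  rw [relabel, if_pos (getElem_mem hi), hL.idxOf_getElem]

theorem relabel_of_notMem (hv : v ∉ L) : relabel L P g v = g v := if_neg hv

theorem relabel_tail_getElem (hL : L.Nodup) {i : ℕ} (hi : i + 1 < L.length) :
    relabel L L.tail g L[i] = L[i + 1] := by
  rw [relabel_getElem hL, getD_eq_getElem _ _ (by rw [length_tail]; omega), getElem_tail]

theorem relabel_tail_getLast (hL : L.Nodup) (hne : L ≠ []) :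
    relabel L L.tail g (L.getLast hne) = L.getLast hne := by
  rw [getLast_eq_getElem, relabel_getElem hL, getD_eq_default _ _ (by simp)]

theorem iterate_relabel_tail (hL : L.Nodup) {i j : ℕ} (hij : i + j < L.length) :
    (relabel L L.tail g)^[j] L[i] = L[i + j] := by
  induction j with
  | zero => rfl
  | succ j ih =>
    rw [iterate_succ_apply', ih (by omega), relabel_tail_getElem hL]
    rfl

end List

def IsParentMap {V : Type*} (p : V → V) (r : V) : Prop :=
  p r = r ∧ ∀ v, ∃ k, p^[k] v = r

namespace IsParentMap

variable {V : Type*} {p : V → V} {r : V}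

open Classical in
noncomputable def depth (h : IsParentMap p r) (v : V) : ℕ := Nat.find (h.2 v)

theorem iterate_depth (h : IsParentMap p r) (v : V) : p^[h.depth v] v = r := by
  classical exact Nat.find_spec (h.2 v)

theorem depth_le (h : IsParentMap p r) {v : V} {k : ℕ} (hk : p^[k] v = r) : h.depth v ≤ k := by
  classical exact Nat.find_min' (h.2 v) hk

theorem iterate_of_depth_le (h : IsParentMap p r) {v : V} {k : ℕ} (hk : h.depth v ≤ k) :
    p^[k] v = r := by
  rw [← Nat.sub_add_cancel hk, iterate_add_apply, h.iterate_depth, iterate_fixed h.1]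

theorem depth_eq_zero (h : IsParentMap p r) {v : V} : h.depth v = 0 ↔ v = r :=
  ⟨fun h0 => by simpa [h0] using h.iterate_depth v,
    fun hv => Nat.le_zero.mp (h.depth_le (k := 0) hv)⟩

theorem depth_iterate (h : IsParentMap p r) {v : V} {i : ℕ} (hi : i ≤ h.depth v) :
    h.depth (p^[i] v) = h.depth v - i := by
  have hle : h.depth (p^[i] v) ≤ h.depth v - i :=
    h.depth_le (by rw [← iterate_add_apply, Nat.sub_add_cancel hi, h.iterate_depth])
  have hge : h.depth v ≤ h.depth (p^[i] v) + i :=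
    h.depth_le (by rw [iterate_add_apply, h.iterate_depth])
  omega

theorem depth_apply (h : IsParentMap p r) {v : V} (hv : v ≠ r) :
    h.depth (p v) + 1 = h.depth v := by
  have hpos : 1 ≤ h.depth v := Nat.one_le_iff_ne_zero.mpr (h.depth_eq_zero.not.mpr hv)
  have := h.depth_iterate hpos
  simp only [iterate_one] at this
  omega

theorem induction_on (h : IsParentMap p r) {P : V → Prop} (root : P r)
    (step : ∀ v, v ≠ r → P (p v) → P v) (v : V) : P v := by
  induction hd : h.depth v generalizing v with
  | zero => exact h.depth_eq_zero.mp hd ▸ root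
  | succ n ih =>
    have hv : v ≠ r := fun hv => by simp [h.depth_eq_zero.mpr hv] at hd
    exact step v hv (ih (p v) (by have := h.depth_apply hv; omega))

theorem eq_root_of_isPeriodicPt (h : IsParentMap p r) {v : V} {k : ℕ} (hk : 0 < k)
    (hv : IsPeriodicPt p k v) : v = r := by
  rw [← (hv.mul_const (h.depth v)).eq]
  exact h.iterate_of_depth_le (Nat.le_mul_of_pos_left _ hk)

theorem apply_ne_self (h : IsParentMap p r) {v : V} (hv : v ≠ r) : p v ≠ v :=
  fun hfix => hv (h.eq_root_of_isPeriodicPt one_pos (by simpa [IsPeriodicPt, IsFixedPt]))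

theorem iterate_injOn (h : IsParentMap p r) {v : V} {i j : ℕ} (hi : i ≤ h.depth v)
    (hj : j ≤ h.depth v) (hij : p^[i] v = p^[j] v) : i = j := by
  have := h.depth_iterate hi
  rw [hij, h.depth_iterate hj] at this
  omega

noncomputable def spine (h : IsParentMap p r) (a : V) : List V :=
  List.iterate p a (h.depth a + 1)

@[simp] theorem length_spine (h : IsParentMap p r) (a : V) :
    (h.spine a).length = h.depth a + 1 := List.length_iterate ..

@[simp] theorem getElem_spine (h : IsParentMap p r) (a : V) {i : ℕ}
    (hi : i < (h.spine a).length) : (h.spine a)[i] = p^[i] a := List.getElem_iterate ..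

theorem nodup_spine (h : IsParentMap p r) (a : V) : (h.spine a).Nodup :=
  List.nodup_iff_injective_get.mpr fun i j hij =>
    Fin.ext (h.iterate_injOn (Nat.lt_succ_iff.mp (by simpa using i.2))
      (Nat.lt_succ_iff.mp (by simpa using j.2)) (by simpa using hij))

theorem spine_ne_nil (h : IsParentMap p r) (a : V) : h.spine a ≠ [] :=
  List.ne_nil_of_length_pos (by simp)

theorem head_spine (h : IsParentMap p r) (a : V) : (h.spine a).head (h.spine_ne_nil a) = a := by
  simp [List.head_eq_getElem]

theorem getLast_spine (h : IsParentMap p r) (a : V) :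
    (h.spine a).getLast (h.spine_ne_nil a) = r := by
  simp [List.getLast_eq_getElem, h.iterate_depth]

theorem root_mem_spine (h : IsParentMap p r) (a : V) : r ∈ h.spine a := by
  simpa [h.getLast_spine] using List.getLast_mem (h.spine_ne_nil a)

theorem spine_eq (h : IsParentMap p r) {a : V} {P : List V} (hP : P.Nodup) (hne : P ≠ [])
    (hiter : ∀ j (hj : j < P.length), p^[j] a = P[j]) (hlast : P.getLast hne = r) :
    h.spine a = P := by
  have hlen : 0 < P.length := List.length_pos_iff.mpr hne
  rw [List.getLast_eq_getElem] at hlast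
  have hd : h.depth a = P.length - 1 := by
    refine le_antisymm (h.depth_le (by rw [hiter _ (by omega), hlast])) (not_lt.mp fun hlt => ?_)
    have := h.iterate_depth a
    rw [hiter _ (by omega)] at this
    have := hP.getElem_inj_iff.mp (this.trans hlast.symm)
    omega
  exact List.ext_getElem (by rw [length_spine]; omega) fun i _ _ => by rw [getElem_spine, hiter]

end IsParentMap

namespace List

variable {α : Type*} [DecidableEq α] {L : List α} {g : α → α}

theorem isParentMap_relabel_tail (hL : L.Nodup) (hne : L ≠ [])
    (hreach : ∀ x, ∃ n, g^[n] x ∈ L) : IsParentMap (relabel L L.tail g) (L.getLast hne) := by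
  refine ⟨relabel_tail_getLast hL hne, fun x => ?_⟩
  obtain ⟨n, hn⟩ := exists_iterate_mem_of_eqOn_compl (s := {x | x ∈ L})
    (fun _ hv => relabel_of_notMem hv) hreach x
  obtain ⟨i, hi, hLi⟩ := getElem_of_mem hn
  refine ⟨(L.length - 1 - i) + n, ?_⟩
  rw [iterate_add_apply, ← hLi, iterate_relabel_tail hL (by omega), getLast_eq_getElem]
  congr 1
  omega

theorem spine_relabel_tail (hL : L.Nodup) (hne : L ≠ [])
    (h : IsParentMap (relabel L L.tail g) (L.getLast hne)) : h.spine (L.head hne) = L := by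
  refine h.spine_eq hL hne (fun j hj => ?_) rfl
  rw [head_eq_getElem, iterate_relabel_tail hL (by simpa using hj)]
  simp

end List

section JoyalEncode

variable {V : Type*} [LinearOrder V] {p : V → V} {r : V}

noncomputable def joyalEncode (h : IsParentMap p r) (a : V) : V → V :=
  List.relabel ((h.spine a).toFinset.sort (· ≤ ·)) (h.spine a) p

theorem map_joyalEncode_sort (h : IsParentMap p r) (a : V) :
    ((h.spine a).toFinset.sort (· ≤ ·)).map (joyalEncode h a) = h.spine a := by
  refine List.ext_getElem (by simp [List.toFinset_card_of_nodup (h.nodup_spine a)]) ?_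
  intro i h1 h2
  rw [List.getElem_map]
  unfold joyalEncode
  rw [List.relabel_getElem (Finset.sort_nodup _ _), List.getD_eq_getElem _ _ h2]

theorem joyalEncode_of_notMem (h : IsParentMap p r) {a v : V} (hv : v ∉ h.spine a) :
    joyalEncode h a v = p v :=
  List.relabel_of_notMem (by simpa using hv)

theorem periodicPts_joyalEncode (h : IsParentMap p r) (a : V) :
    periodicPts (joyalEncode h a) = {v | v ∈ h.spine a} := by
  have hmem : ∀ v, v ∈ (h.spine a).toFinset.sort (· ≤ ·) ↔ v ∈ h.spine a := by simp
  have hmap := map_joyalEncode_sort h a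
  have hmaps : MapsTo (joyalEncode h a) {v | v ∈ h.spine a} {v | v ∈ h.spine a} := fun v hv =>
    hmap ▸ List.mem_map_of_mem ((hmem v).2 hv)
  refine (periodicPts_subset_of_mapsTo hmaps fun v => ?_).antisymm
    (subset_periodicPts_of_injOn (List.finite_toSet _) hmaps fun v hv w hw => ?_)
  · exact exists_iterate_mem_of_eqOn_compl (fun _ hu => joyalEncode_of_notMem h hu)
      (fun u => ⟨h.depth u, by rw [h.iterate_depth]; exact h.root_mem_spine a⟩) v
  · exact List.inj_on_of_nodup_map (hmap.symm ▸ h.nodup_spine a) ((hmem v).2 hv) ((hmem w).2 hw)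

end JoyalEncode

section JoyalDecode

variable {V : Type*} [LinearOrder V] [Finite V] {f : V → V}

noncomputable def joyalSpine (f : V → V) : List V :=
  ((toFinite (periodicPts f)).toFinset.sort (· ≤ ·)).map f

theorem nodup_joyalSpine (f : V → V) : (joyalSpine f).Nodup :=
  (Finset.sort_nodup _ _).map_on fun _ hx _ hy =>
    (bijOn_periodicPts f).injOn (by simpa using hx) (by simpa using hy)

theorem mem_joyalSpine {v : V} : v ∈ joyalSpine f ↔ v ∈ periodicPts f := by
  simpa [joyalSpine] using Set.ext_iff.mp (bijOn_periodicPts f).image_eq v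

theorem joyalSpine_ne_nil [Nonempty V] (f : V → V) : joyalSpine f ≠ [] :=
  have ⟨_, hn⟩ := exists_iterate_mem_periodicPts f (Classical.arbitrary V)
  List.ne_nil_of_mem (mem_joyalSpine.mpr hn)

noncomputable def joyalDecode (f : V → V) : V → V :=
  List.relabel (joyalSpine f) (joyalSpine f).tail f

theorem isParentMap_joyalDecode [Nonempty V] (f : V → V) :
    IsParentMap (joyalDecode f) ((joyalSpine f).getLast (joyalSpine_ne_nil f)) :=
  List.isParentMap_relabel_tail (nodup_joyalSpine f) _ fun x =>
    have ⟨n, hn⟩ := exists_iterate_mem_periodicPts f x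
    ⟨n, mem_joyalSpine.mpr hn⟩

theorem joyalSpine_joyalEncode {p : V → V} {r : V} (h : IsParentMap p r) (a : V) :
    joyalSpine (joyalEncode h a) = h.spine a := by
  rw [joyalSpine, ← map_joyalEncode_sort h a]
  congr 2
  ext v
  simp [periodicPts_joyalEncode]

theorem joyalDecode_joyalEncode {p : V → V} {r : V} (h : IsParentMap p r) (a : V) :
    joyalDecode (joyalEncode h a) = p := by
  unfold joyalDecode
  rw [joyalSpine_joyalEncode]
  funext v
  by_cases hv : v ∈ h.spine a
  · obtain ⟨i, hi, rfl⟩ := List.getElem_of_mem hv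
    rcases Nat.lt_or_ge (i + 1) (h.spine a).length with hlt | hge
    · rw [List.relabel_tail_getElem (h.nodup_spine a) hlt, h.getElem_spine, h.getElem_spine,
        iterate_succ_apply']
    · obtain rfl : i = (h.spine a).length - 1 := by omega
      rw [← List.getLast_eq_getElem (h.spine_ne_nil a),
        List.relabel_tail_getLast (h.nodup_spine a), h.getLast_spine, h.1]
  · rw [List.relabel_of_notMem hv, joyalEncode_of_notMem h hv]

theorem spine_joyalDecode [Nonempty V] (f : V → V) :
    (isParentMap_joyalDecode f).spine ((joyalSpine f).head (joyalSpine_ne_nil f)) = joyalSpine f :=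
  List.spine_relabel_tail (nodup_joyalSpine f) _ _

theorem joyalEncode_joyalDecode [Nonempty V] (f : V → V) :
    joyalEncode (isParentMap_joyalDecode f) ((joyalSpine f).head (joyalSpine_ne_nil f)) = f := by
  have hsort : (joyalSpine f).toFinset = (toFinite (periodicPts f)).toFinset := by
    ext v
    simp [mem_joyalSpine]
  unfold joyalEncode
  rw [spine_joyalDecode, hsort]
  funext v
  by_cases hv : v ∈ periodicPts f
  · obtain ⟨i, hi, rfl⟩ := List.getElem_of_mem
      ((Finset.mem_sort (· ≤ ·)).mpr ((toFinite (periodicPts f)).mem_toFinset.mpr hv))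
    rw [List.relabel_getElem (Finset.sort_nodup _ _),
      List.getD_eq_getElem _ _ (by simpa [joyalSpine] using hi)]
    simp only [joyalSpine, List.getElem_map]
  · rw [List.relabel_of_notMem (by simpa), joyalDecode,
      List.relabel_of_notMem (mt mem_joyalSpine.mp hv)]

end JoyalDecode

noncomputable def joyalEquiv (V : Type*) [Finite V] [LinearOrder V] [Nonempty V] :
    ({q : (V → V) × V // IsParentMap q.1 q.2} × V) ≃ (V → V) where
  toFun x := joyalEncode x.1.2 x.2
  invFun f :=
    (⟨(joyalDecode f, _), isParentMap_joyalDecode f⟩, (joyalSpine f).head (joyalSpine_ne_nil f))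
  left_inv := by
    rintro ⟨⟨⟨p, r⟩, h⟩, a⟩
    refine Prod.ext (Subtype.ext (Prod.ext (joyalDecode_joyalEncode h a) ?_)) ?_
    · simp only [joyalSpine_joyalEncode, h.getLast_spine]
    · simp only [joyalSpine_joyalEncode, h.head_spine]
  right_inv := joyalEncode_joyalDecode

open SimpleGraph

def parentGraph {V : Type*} (p : V → V) : SimpleGraph V :=
  SimpleGraph.fromRel fun v w => p v = w

namespace IsParentMap

variable {V : Type*} {p q : V → V} {r : V}

theorem parentGraph_adj_apply (h : IsParentMap p r) {v : V} (hv : v ≠ r) :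
    (parentGraph p).Adj v (p v) :=
  ⟨(h.apply_ne_self hv).symm, Or.inl rfl⟩

theorem connected_parentGraph (h : IsParentMap p r) : (parentGraph p).Connected :=
  have : Nonempty V := ⟨r⟩
  have hreach (v : V) : (parentGraph p).Reachable v r :=
    h.induction_on .rfl (fun _ hu hpu => (h.parentGraph_adj_apply hu).reachable.trans hpu) v
  .mk fun v w => (hreach v).trans (hreach w).symm

theorem isTree_parentGraph [Finite V] (h : IsParentMap p r) : (parentGraph p).IsTree := by
  have hconn := h.connected_parentGraph
  refine isTree_iff_connected_and_card.mpr
    ⟨hconn, le_antisymm ?_ hconn.card_vert_le_card_edgeSet_add_one⟩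
  have hsurj : Surjective fun v : {v // v ≠ r} =>
      (⟨s(v.1, p v.1), h.parentGraph_adj_apply v.2⟩ : (parentGraph p).edgeSet) := by
    rintro ⟨e, he⟩
    induction e using Sym2.ind with | _ v w => ?_
    obtain ⟨hne, hvw | hwv⟩ := he
    · have hv : v ≠ r := by rintro rfl; exact hne (hvw ▸ h.1.symm)
      exact ⟨⟨v, hv⟩, by simp [hvw]⟩
    · have hw : w ≠ r := by rintro rfl; exact hne (hwv ▸ h.1)
      exact ⟨⟨w, hw⟩, by simp [hwv, Sym2.eq_swap]⟩
  calc Nat.card (parentGraph p).edgeSet + 1 ≤ Nat.card {v // v ≠ r} + 1 :=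
        Nat.add_le_add_right (Nat.card_le_card_of_surjective _ hsurj) 1
    _ = Nat.card V := by
      classical rw [← Finite.card_option, Nat.card_congr (Equiv.optionSubtypeNe r)]

theorem eq_of_parentGraph_eq (hp : IsParentMap p r) (hq : IsParentMap q r)
    (hpq : parentGraph p = parentGraph q) : p = q := by
  funext v
  refine hp.induction_on (P := fun v => p v = q v) (hp.1.trans hq.1.symm) (fun u hu ih => ?_) v
  obtain ⟨-, hqu | hqpu⟩ := hpq ▸ hp.parentGraph_adj_apply hu
  · exact hqu.symm
  · refine absurd (hp.eq_root_of_isPeriodicPt two_pos ?_) hu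
    show p (p u) = u
    rw [ih, hqpu]

end IsParentMap

namespace SimpleGraph.Connected

variable {V : Type*} {G : SimpleGraph V} {r v : V}

theorem exists_adj_dist_lt (hG : G.Connected) (hv : v ≠ r) :
    ∃ w, G.Adj v w ∧ G.dist w r < G.dist v r := by
  obtain ⟨q, hq⟩ := hG.exists_walk_length_eq_dist v r
  have hnil : ¬q.Nil := Walk.not_nil_of_ne hv
  refine ⟨q.snd, q.adj_snd hnil, ?_⟩
  have := q.length_tail_add_one hnil
  have := dist_le q.tail
  omega

open Classical in
noncomputable def stepToward (hG : G.Connected) (r v : V) : V :=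
  if hv : v = r then r else (hG.exists_adj_dist_lt hv).choose

theorem adj_stepToward (hG : G.Connected) (hv : v ≠ r) : G.Adj v (hG.stepToward r v) := by
  rw [stepToward, dif_neg hv]
  exact (hG.exists_adj_dist_lt hv).choose_spec.1

theorem dist_stepToward_lt (hG : G.Connected) (hv : v ≠ r) :
    G.dist (hG.stepToward r v) r < G.dist v r := by
  rw [stepToward, dif_neg hv]
  exact (hG.exists_adj_dist_lt hv).choose_spec.2

theorem isParentMap_stepToward (hG : G.Connected) (r : V) :
    IsParentMap (hG.stepToward r) r := by
  refine ⟨dif_pos rfl, fun v => ?_⟩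
  induction hd : G.dist v r using Nat.strong_induction_on generalizing v with | _ d ih
  by_cases hv : v = r
  · exact ⟨0, hv⟩
  obtain ⟨k, hk⟩ := ih _ (hd ▸ hG.dist_stepToward_lt hv) _ rfl
  exact ⟨k + 1, hk⟩

theorem parentGraph_stepToward_le (hG : G.Connected) (r : V) :
    parentGraph (hG.stepToward r) ≤ G := by
  have hne : ∀ {v}, hG.stepToward r v ≠ v → v ≠ r :=
    fun hmove hv => hmove (hv ▸ dif_pos rfl)
  rintro v w ⟨hvw, h | h⟩
  · exact h ▸ hG.adj_stepToward (hne (h ▸ hvw.symm))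
  · exact (h ▸ hG.adj_stepToward (hne (h ▸ hvw))).symm

end SimpleGraph.Connected

theorem SimpleGraph.IsTree.parentGraph_stepToward {V : Type*} [Finite V] {T : SimpleGraph V}
    (hT : T.IsTree) (r : V) : parentGraph (hT.connected.stepToward r) = T := by
  have : Nonempty V := ⟨r⟩
  have hle := hT.connected.parentGraph_stepToward_le r
  exact le_antisymm hle (maximal_isAcyclic_iff_isTree.mpr
    (hT.connected.isParentMap_stepToward r).isTree_parentGraph |>.2 hT.isAcyclic hle)

noncomputable def rootedTreeEquiv (V : Type*) [Finite V] :
    ({T : SimpleGraph V // T.IsTree} × V) ≃ {q : (V → V) × V // IsParentMap q.1 q.2} where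
  toFun x := ⟨(x.1.2.connected.stepToward x.2, x.2), x.1.2.connected.isParentMap_stepToward x.2⟩
  invFun q := (⟨parentGraph q.1.1, q.2.isTree_parentGraph⟩, q.1.2)
  left_inv := fun ⟨⟨_, hT⟩, r⟩ => Prod.ext (Subtype.ext (hT.parentGraph_stepToward r)) rfl
  right_inv := fun ⟨⟨_, r⟩, h⟩ =>
    have hT := h.isTree_parentGraph
    Subtype.ext (Prod.ext ((hT.connected.isParentMap_stepToward r).eq_of_parentGraph_eq h
      (hT.parentGraph_stepToward r)) rfl)

theorem card_isTree_mul_sq (V : Type*) [Finite V] [LinearOrder V] [Nonempty V] :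
    Nat.card {T : SimpleGraph V // T.IsTree} * Nat.card V ^ 2 = Nat.card V ^ Nat.card V := by
  have := Nat.card_congr (((rootedTreeEquiv V).prodCongr (Equiv.refl V)).trans (joyalEquiv V))
  simpa [Nat.card_prod, Nat.card_fun, sq, mul_assoc] using this

/-- Cayley's formula: the number of labeled trees on `i ≥ 1` vertices equals `i^(i-2)`. -/
theorem cayley_formula (i : ℕ) (hi : 1 ≤ i) :
    Nat.card {G : SimpleGraph (Fin i) // G.IsTree} = i ^ (i - 2) := by
  have : Nonempty (Fin i) := ⟨⟨0, hi⟩⟩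
  have key := card_isTree_mul_sq (Fin i)
  rw [Nat.card_fin] at key
  obtain rfl | hi2 := hi.eq_or_lt
  · simpa using key
  · refine Nat.eq_of_mul_eq_mul_right (pow_pos hi 2) ?_
    rw [key, ← pow_add, Nat.sub_add_cancel hi2]
end
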